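/- arXiv:1608.04525 — 3 statements merged into one kernel-verified Lean document; each statement's English description precedes it below -/
import Mathlib

section
/- Let A be a commutative ring in which every regular element (non-zerodivisor) is a unit. Then any injective A-module homomorphism between two finite free A-modules of the same finite rank is surjective, hence an isomorphism. -/
/-!
McCoy's theorem: a square matrix over a commutative ring whose action on column vectors is
injective has a determinant that is not a zero divisor. If regular elements are units, an
injective endomorphism of a finite free module therefore has unit determinant and is invertible;
an injective map between free modules of the same finite rank is such an endomorphism after
identifying the target with the source.
-/

open Matrix

theorem Matrix.det_mem_nonZeroDivisors_of_mulVec_injective {R n : Type*} [CommRing R]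
    [Fintype n] [DecidableEq n] {A : Matrix n n R} (hA : Function.Injective A.mulVec) :
    A.det ∈ nonZeroDivisors R :=
  nonsingular_iff_det_mem_nonZeroDivisors.mp <|
    isLeftRegular_iff_nonsingular.mp <| isLeftRegular_iff_mulVec_injective.mpr hA

theorem LinearMap.det_mem_nonZeroDivisors_of_injective {R M : Type*} [CommRing R]
    [AddCommGroup M] [Module R M] [Module.Free R M] [Module.Finite R M] {f : M →ₗ[R] M}
    (hf : Function.Injective f) : LinearMap.det f ∈ nonZeroDivisors R := by
  let b := Module.Free.chooseBasis R M
  rw [← det_toMatrix b]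
  refine Matrix.det_mem_nonZeroDivisors_of_mulVec_injective fun v w hvw => ?_
  have hrepr : ∀ v, toMatrix b b f *ᵥ v = b.equivFun (f (b.equivFun.symm v)) := fun v => by
    have := toMatrix_mulVec_repr b b f (b.equivFun.symm v)
    rwa [← Module.Basis.equivFun_apply, ← Module.Basis.equivFun_apply,
      LinearEquiv.apply_symm_apply] at this
  simp only [hrepr, b.equivFun.injective.eq_iff] at hvw
  exact b.equivFun.symm.injective (hf hvw)

theorem Module.End.isUnit_of_injective {R M : Type*} [CommRing R] [AddCommGroup M] [Module R M]
    [Module.Free R M] [Module.Finite R M] (hR : ∀ a ∈ nonZeroDivisors R, IsUnit a)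
    {f : Module.End R M} (hf : Function.Injective f) : IsUnit f :=
  (LinearMap.isUnit_iff_isUnit_det f).mpr (hR _ (f.det_mem_nonZeroDivisors_of_injective hf))

/-- Let `A` be a commutative ring in which every regular element
(non-zerodivisor) is a unit.  Then any injective `A`-linear map between two finite free
`A`-modules of the same finite rank is surjective (hence an isomorphism). -/
theorem stmt_5 (A : Type*) [CommRing A]
    (hA : ∀ a ∈ nonZeroDivisors A, IsUnit a)
    (M N : Type*) [AddCommGroup M] [Module A M] [AddCommGroup N] [Module A N]
    (n : ℕ) (bM : Module.Basis (Fin n) A M) (bN : Module.Basis (Fin n) A N)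
    (f : M →ₗ[A] N) (hf : Function.Injective f) :
    Function.Surjective f := by
  have := Module.Free.of_basis bM
  have := Module.Finite.of_basis bM
  let e : N ≃ₗ[A] M := bN.equiv bM (Equiv.refl _)
  have hg : Function.Injective (e.toLinearMap ∘ₗ f) := e.injective.comp hf
  have hbij := (Module.End.isUnit_iff _).mp (Module.End.isUnit_of_injective hA hg)
  simpa using e.symm.surjective.comp hbij.surjective
end

section
/- Let A be a Noetherian commutative ring and M a finite A-module with an injection M ↪ Q(A)^r into the r-th power of the total ring of fractions. If M_p is a free A_p-module of rank at least r for every associated prime p of A, then the induced map M ⊗_A Q(A) → Q(A)^r is an isomorphism. -/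
/-!
Injectivity is exactness of localization. For surjectivity, fix `v ∈ Q(A)^r`: the ideal of those
`a ∈ A` with `a • v ∈ ι(M)` must contain a non-zero-divisor, for otherwise prime avoidance over the
finitely many associated primes puts it inside an associated prime `p`. But `A_p` is a local ring
whose maximal ideal is the annihilator of some `x`, and over such a ring an injective map between
free modules of the same finite rank is an isomorphism: multiplying by `x` shows that the reduction
of its matrix modulo the maximal ideal is still injective, so the determinant is a unit. Applied to
`M_p → A_p^r`, this gives `t ∉ p` with `t • v ∈ ι(M)`.
-/

open IsLocalRing TensorProduct

section DepthZero

variable {R : Type*} [CommRing R] [IsLocalRing R] [IsNoetherianRing R]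

theorem Matrix.isUnit_of_mulVec_injective_of_maximalIdeal_mem_associatedPrimes
    (hR : maximalIdeal R ∈ associatedPrimes R R) {n : Type*} [Fintype n] [DecidableEq n]
    (A : Matrix n n R) (hA : Function.Injective A.mulVec) : IsUnit A := by
  obtain ⟨-, x, hx⟩ := isAssociatedPrime_iff.mp hR
  have mem_maximalIdeal {a : R} : a ∈ maximalIdeal R ↔ a * x = 0 := by
    rw [hx, Submodule.mem_colon_singleton, Submodule.mem_bot, smul_eq_mul]
  let B := A.map (residue R)
  have hB : Function.Injective B.mulVecLin := by
    refine (injective_iff_map_eq_zero _).mpr fun w hw ↦ ?_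
    rw [Matrix.mulVecLin_apply] at hw
    obtain ⟨u, rfl⟩ : ∃ u : n → R, residue R ∘ u = w :=
      ⟨fun i ↦ (residue_surjective (w i)).choose,
        funext fun i ↦ (residue_surjective (w i)).choose_spec⟩
    have hAu : A.mulVec (x • u) = 0 := by
      funext i
      have : residue R (A.mulVec u i) = 0 := by rw [RingHom.map_mulVec, hw]; rfl
      rw [Matrix.mulVec_smul, Pi.smul_apply, smul_eq_mul, mul_comm, Pi.zero_apply,
        ← mem_maximalIdeal, ← residue_eq_zero_iff, this]
    funext i
    have : u i * x = 0 := by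
      simpa [mul_comm] using congrFun (hA (hAu.trans (Matrix.mulVec_zero A).symm)) i
    exact (residue_eq_zero_iff _).mpr (mem_maximalIdeal.mpr this)
  rw [Matrix.isUnit_iff_isUnit_det]
  have : IsUnit (residue R A.det) := by
    rw [RingHom.map_det]
    exact (Matrix.isUnit_iff_isUnit_det _).mp (Matrix.mulVec_injective_iff_isUnit.mp hB)
  exact (isUnit_map_iff (residue R) _).mp this

theorem LinearMap.surjective_of_injective_of_maximalIdeal_mem_associatedPrimes
    (hR : maximalIdeal R ∈ associatedPrimes R R) {V : Type*} [AddCommGroup V] [Module R V]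
    [Module.Free R V] {r : ℕ} (hr : (r : Cardinal) ≤ Module.rank R V)
    (ψ : V →ₗ[R] Fin r → R) (hψ : Function.Injective ψ) : Function.Surjective ψ := by
  have hrank : Module.rank R V = r := by
    refine le_antisymm ?_ hr
    simpa using ψ.lift_rank_le_of_injective hψ
  have := Module.finite_of_rank_eq_nat hrank
  let e := (Module.finBasisOfFinrankEq R V (Module.finrank_eq_of_rank_eq hrank)).equivFun
  let g := ψ ∘ₗ e.symm.toLinearMap
  have hmulVec : (LinearMap.toMatrix' g).mulVec = g := funext g.toMatrix'_mulVec
  have hunit := Matrix.isUnit_of_mulVec_injective_of_maximalIdeal_mem_associatedPrimes hR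
    (LinearMap.toMatrix' g) (hmulVec ▸ hψ.comp e.symm.injective)
  have hg : Function.Surjective g := hmulVec ▸ Matrix.mulVec_surjective_iff_isUnit.mpr hunit
  intro w
  obtain ⟨u, hu⟩ := hg w
  exact ⟨e.symm u, hu⟩

end DepthZero

section AssociatedPrimes

variable {A : Type*} [CommRing A]

theorem Ideal.exists_mem_associatedPrimes_le_of_disjoint_nonZeroDivisors [IsNoetherianRing A]
    {I : Ideal A} (h : Disjoint (I : Set A) (nonZeroDivisors A)) :
    ∃ p ∈ associatedPrimes A A, I ≤ p :=
  (I.subset_union_prime_finite (associatedPrimes.finite A A) (f := id) 0 0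
    fun _ hp _ _ ↦ hp.isPrime).1 <|
      biUnion_associatedPrimes_eq_compl_nonZeroDivisors A ▸ h.subset_compl_right

variable {p : Ideal A} [p.IsPrime]

theorem nonZeroDivisors_le_primeCompl_of_mem_associatedPrimes [IsNoetherianRing A]
    (hp : p ∈ associatedPrimes A A) : nonZeroDivisors A ≤ p.primeCompl := by
  intro s hs hsp
  have : s ∈ ⋃ q ∈ associatedPrimes A A, (q : Set A) := Set.mem_biUnion hp hsp
  rw [biUnion_associatedPrimes_eq_compl_nonZeroDivisors] at this
  exact this hs

theorem maximalIdeal_mem_associatedPrimes_of_mem_associatedPrimes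
    (hp : p ∈ associatedPrimes A A) :
    maximalIdeal (Localization.AtPrime p) ∈
      associatedPrimes (Localization.AtPrime p) (Localization.AtPrime p) :=
  Module.associatedPrimes.mem_associatedPrimes_of_comap_mem_associatedPrimes_of_isLocalizedModule
    p.primeCompl (Algebra.linearMap A (Localization.AtPrime p)) _
    (by simpa [Localization.AtPrime.under_maximalIdeal] using hp)

end AssociatedPrimes

theorem IsLocalizedModule.exists_smul_mem_range_of_surjective_map {R : Type*} [CommRing R]
    (S : Submonoid R) {M M' N N' : Type*} [AddCommGroup M] [Module R M] [AddCommGroup M']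
    [Module R M'] [AddCommGroup N] [Module R N] [AddCommGroup N'] [Module R N']
    (f : M →ₗ[R] M') (g : N →ₗ[R] N') [IsLocalizedModule S f] [IsLocalizedModule S g]
    (h : M →ₗ[R] N) (hh : Function.Surjective (map S f g h)) (v : N) :
    ∃ s ∈ S, s • v ∈ LinearMap.range h := by
  obtain ⟨z, hz⟩ := hh (g v)
  obtain ⟨⟨m, s⟩, hms⟩ := surj S f z
  have : g (h m) = g ((s : R) • v) := by
    rw [← map_apply S f g, ← hms, Submonoid.smul_def, map_smul, hz, map_smul]
  obtain ⟨c, hc⟩ := exists_of_eq (S := S) this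
  refine ⟨c * s, mul_mem c.2 s.2, (c : R) • m, ?_⟩
  rw [map_smul, ← Submonoid.smul_def, hc, Submonoid.smul_def, smul_smul]

theorem LinearMap.liftBaseChange_injective_of_isLocalization {R : Type*} [CommRing R]
    (S : Submonoid R) (Q : Type*) [CommRing Q] [Algebra R Q] [IsLocalization S Q]
    {M N : Type*} [AddCommGroup M] [Module R M] [AddCommGroup N] [Module R N] [Module Q N]
    [IsScalarTower R Q N] (f : M →ₗ[R] N) (hf : Function.Injective f) :
    Function.Injective (f.liftBaseChange Q) := by
  refine IsLocalizedModule.injective_of_map_zero S (TensorProduct.mk R Q M 1) fun m hm ↦ ?_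
  have hm : f m = 0 := by simpa using hm
  rw [hf (hm.trans f.map_zero.symm), map_zero]

theorem LinearMap.liftBaseChange_surjective_of_exists_smul_mem_range {R : Type*} [CommRing R]
    (S : Submonoid R) (Q : Type*) [CommRing Q] [Algebra R Q] [IsLocalization S Q]
    {M N : Type*} [AddCommGroup M] [Module R M] [AddCommGroup N] [Module R N] [Module Q N]
    [IsScalarTower R Q N] (f : M →ₗ[R] N) (hf : ∀ v, ∃ s ∈ S, s • v ∈ LinearMap.range f) :
    Function.Surjective (f.liftBaseChange Q) := by
  intro v
  obtain ⟨s, hs, m, hm⟩ := hf v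
  refine ⟨IsLocalization.mk' Q 1 ⟨s, hs⟩ ⊗ₜ m, ?_⟩
  rw [liftBaseChange_tmul, hm, ← algebraMap_smul Q s, smul_smul, IsLocalization.mk'_spec,
    map_one, one_smul]

theorem exists_notMem_smul_mem_range_of_mem_associatedPrimes {A : Type*} [CommRing A]
    [IsNoetherianRing A] {p : Ideal A} [p.IsPrime] (hp : p ∈ associatedPrimes A A)
    {M : Type*} [AddCommGroup M] [Module A M] {r : ℕ}
    (hfree : Module.Free (Localization.AtPrime p) (LocalizedModule p.primeCompl M))
    (hrank :
      (r : Cardinal) ≤ Module.rank (Localization.AtPrime p) (LocalizedModule p.primeCompl M))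
    (ι : M →ₗ[A] (Fin r → FractionRing A)) (hι : Function.Injective ι)
    (v : Fin r → FractionRing A) : ∃ t ∉ p, t • v ∈ LinearMap.range ι := by
  let Ap := Localization.AtPrime p
  let π : (Fin r → FractionRing A) →ₗ[A] Fin r → Ap := .pi fun i ↦
    IsLocalizedModule.liftOfLE _ _ (nonZeroDivisors_le_primeCompl_of_mem_associatedPrimes hp)
      (Algebra.linearMap A (FractionRing A)) (Algebra.linearMap A Ap) ∘ₗ .proj i
  let mk := LocalizedModule.mkLinearMap p.primeCompl M
  let ψ :=
    (IsLocalizedModule.map p.primeCompl mk π ι).extendScalarsOfIsLocalization p.primeCompl Ap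
  have hψ : Function.Surjective ψ :=
    ψ.surjective_of_injective_of_maximalIdeal_mem_associatedPrimes
      (maximalIdeal_mem_associatedPrimes_of_mem_associatedPrimes hp) hrank
      (IsLocalizedModule.map_injective p.primeCompl mk π ι hι)
  exact IsLocalizedModule.exists_smul_mem_range_of_surjective_map p.primeCompl mk π ι hψ v

theorem stmt_6_general (A : Type*) [CommRing A] [IsNoetherianRing A]
    (M : Type*) [AddCommGroup M] [Module A M]
    (r : ℕ) (ι : M →ₗ[A] (Fin r → FractionRing A)) (hι : Function.Injective ι)
    (hfree : ∀ p : {q : Ideal A // q ∈ associatedPrimes A A},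
      Module.Free (Localization (p.1.primeCompl (hp := p.2.isPrime)))
        (LocalizedModule (p.1.primeCompl (hp := p.2.isPrime)) M) ∧
      (r : Cardinal) ≤ Module.rank (Localization (p.1.primeCompl (hp := p.2.isPrime)))
        (LocalizedModule (p.1.primeCompl (hp := p.2.isPrime)) M)) :
    Function.Bijective (ι.liftBaseChange (FractionRing A)) := by
  refine ⟨ι.liftBaseChange_injective_of_isLocalization (nonZeroDivisors A) _ hι, ?_⟩
  refine ι.liftBaseChange_surjective_of_exists_smul_mem_range (nonZeroDivisors A) _ fun v ↦ ?_
  by_contra! hv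
  obtain ⟨p, hp, hle⟩ :=
    ((LinearMap.range ι).colon {v}).exists_mem_associatedPrimes_le_of_disjoint_nonZeroDivisors
      (Set.disjoint_right.mpr fun s hs hsv ↦ hv s hs (Submodule.mem_colon_singleton.mp hsv))
  have := hp.isPrime
  obtain ⟨hfree_p, hrank_p⟩ := hfree ⟨p, hp⟩
  obtain ⟨t, ht, htv⟩ :=
    exists_notMem_smul_mem_range_of_mem_associatedPrimes hp hfree_p hrank_p ι hι v
  exact ht (hle (Submodule.mem_colon_singleton.mpr htv))

/-- Let `A` be a Noetherian commutative ring, `M` a finite `A`-module with an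
`A`-linear injection `ι : M ↪ Q(A)^r` into the `r`-th power of the total ring of fractions.
If `M_p` is a free `A_p`-module of rank at least `r` for every associated prime `p` of `A`,
then the induced map `M ⊗_A Q(A) → Q(A)^r` is an isomorphism (bijective). -/
theorem stmt_6 (A : Type*) [CommRing A] [IsNoetherianRing A]
    (M : Type*) [AddCommGroup M] [Module A M] [Module.Finite A M]
    (r : ℕ) (ι : M →ₗ[A] (Fin r → FractionRing A)) (hι : Function.Injective ι)
    (hfree : ∀ p : {q : Ideal A // q ∈ associatedPrimes A A},
      Module.Free (Localization (p.1.primeCompl (hp := p.2.isPrime)))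
        (LocalizedModule (p.1.primeCompl (hp := p.2.isPrime)) M) ∧
      (r : Cardinal) ≤ Module.rank (Localization (p.1.primeCompl (hp := p.2.isPrime)))
        (LocalizedModule (p.1.primeCompl (hp := p.2.isPrime)) M)) :
    Function.Bijective (ι.liftBaseChange (FractionRing A)) :=
  stmt_6_general A M r ι hι hfree
end

section
/- Let A be a Noetherian commutative ring and M a finite A-module. Then M has rank r in the sense that M ⊗_A Q(A) ≅ Q(A)^r if and only if M_p is a free A_p-module of rank r for every associated prime p of A. -/
/-!
Every associated prime `p` of `A` consists of zero divisors, so `Q(A) → A_p` is a further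
localization and a basis of `Q(A) ⊗ M` base-changes to a basis of `M_p`. Conversely, `Q(A)` is a
Noetherian total ring of fractions, hence semilocal, and each of its maximal ideals `P` contracts to
an associated prime `p` of `A`; a basis of `M_p` base-changes to one of `Q(A)_P ⊗ M`. So `Q(A) ⊗ M`
is locally free of rank `r` over a semilocal ring, hence flat with all fibres of dimension `r`,
hence free of rank `r`.
-/

open TensorProduct nonZeroDivisors

namespace Module.Basis

variable {R S M ι : Type*} [CommRing R] [CommRing S] [Algebra R S] [AddCommGroup M] [Module R M]

noncomputable def baseChangeTensorProduct (T : Type*) [CommRing T] [Algebra S T] [Algebra R T]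
    [IsScalarTower R S T] (b : Basis ι S (S ⊗[R] M)) : Basis ι T (T ⊗[R] M) :=
  (b.baseChange T).map (AlgebraTensorModule.cancelBaseChange R S T T M)

noncomputable def localizedModuleOfLE {S T : Submonoid R} (h : S ≤ T)
    (b : Basis ι (Localization S) (Localization S ⊗[R] M)) :
    Basis ι (Localization T) (LocalizedModule T M) :=
  letI := IsLocalization.localizationAlgebraOfSubmonoidLe (Localization S) (Localization T) S T h
  haveI := IsLocalization.localization_isScalarTower_of_submonoid_le
    (Localization S) (Localization T) S T h
  (b.baseChangeTensorProduct (Localization T)).map (LocalizedModule.equivTensorProduct T M).symm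

noncomputable def tensorProductAtPrimeOfUnder (P : Ideal S) [P.IsPrime]
    (b : Basis ι (Localization.AtPrime (P.under R)) (LocalizedModule (P.under R).primeCompl M)) :
    Basis ι (Localization.AtPrime P) (Localization.AtPrime P ⊗[S] (S ⊗[R] M)) :=
  letI := Localization.AtPrime.algebraOfLiesOver (P.under R) P
  ((b.map (LocalizedModule.equivTensorProduct _ M)).baseChangeTensorProduct
    (Localization.AtPrime P)).map
    (AlgebraTensorModule.cancelBaseChange R S (Localization.AtPrime P) _ M).symm

end Module.Basis

theorem Ideal.finrank_quotient_tensorProduct_eq_card {R M ι : Type*} [CommRing R] [AddCommGroup M]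
    [Module R M] [Fintype ι] (P : Ideal R) [P.IsMaximal]
    (b : Module.Basis ι (Localization.AtPrime P) (Localization.AtPrime P ⊗[R] M)) :
    Module.finrank (R ⧸ P) ((R ⧸ P) ⊗[R] M) = Fintype.card ι := by
  let := Ideal.Quotient.field P
  rw [← Module.finrank_baseChange (R := P.ResidueField) (S := R ⧸ P),
    (AlgebraTensorModule.cancelBaseChange R (R ⧸ P) P.ResidueField P.ResidueField M).finrank_eq,
    Module.finrank_eq_card_basis (b.baseChangeTensorProduct P.ResidueField)]

theorem Module.nonempty_basis_of_localization_maximal {R N : Type*} [CommRing R]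
    [Finite (MaximalSpectrum R)] [AddCommGroup N] [Module R N] [Module.Finite R N] (r : ℕ)
    (h : ∀ (P : Ideal R) [P.IsMaximal],
      Nonempty (Basis (Fin r) (Localization.AtPrime P) (Localization.AtPrime P ⊗[R] N))) :
    Nonempty (Basis (Fin r) R N) := by
  have : Flat R N := by
    refine flat_of_isLocalized_maximal R N (fun P _ ↦ Localization.AtPrime P ⊗[R] N)
      (fun P _ ↦ TensorProduct.mk R _ N 1) fun P _ ↦ ?_
    obtain ⟨b⟩ := h P
    have := Free.of_basis b
    exact .trans R (Localization.AtPrime P) _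
  refine nonempty_basis_of_flat_of_finrank_eq R N r fun P ↦ ?_
  obtain ⟨b⟩ := h P.1
  simpa using P.1.finrank_quotient_tensorProduct_eq_card b

section

variable {A : Type*} [CommRing A] [IsNoetherianRing A]

theorem nonZeroDivisors_le_primeCompl_of_mem_associatedPrimes_s7 {q : Ideal A}
    (hq : q ∈ associatedPrimes A A) : A⁰ ≤ q.primeCompl (hp := hq.isPrime) := by
  intro a ha haq
  have : a ∈ ⋃ p ∈ associatedPrimes A A, (p : Set A) := Set.mem_biUnion hq haq
  rw [biUnion_associatedPrimes_eq_compl_nonZeroDivisors] at this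
  exact this ha

theorem Ideal.under_mem_associatedPrimes_of_isMaximal (P : Ideal (FractionRing A)) [P.IsMaximal] :
    P.under A ∈ associatedPrimes A A :=
  Module.associatedPrimes.comap_mem_associatedPrimes_of_mem_associatedPrimes_of_isLocalizedModule_of_fg
    A⁰ (Algebra.linearMap A (FractionRing A)) P
    (Ideal.IsMaximal.mem_associatedPrimes_of_isFractionRing _ P)
    ((isNoetherianRing_iff_ideal_fg A).mp ‹_› _)

end

/-- Let `A` be a Noetherian commutative ring and `M` a finite `A`-module.
Then `M ⊗_A Q(A) ≅ Q(A)^r` (i.e. `M` has rank `r`) if and only if `M_p` is a free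
`A_p`-module of rank `r` for every associated prime `p` of `A`. -/
theorem stmt_7 (A : Type*) [CommRing A] [IsNoetherianRing A]
    (M : Type*) [AddCommGroup M] [Module A M] [Module.Finite A M] (r : ℕ) :
    Nonempty ((FractionRing A ⊗[A] M) ≃ₗ[FractionRing A] (Fin r → FractionRing A)) ↔
      ∀ p : {q : Ideal A // q ∈ associatedPrimes A A},
        Nonempty (Module.Basis (Fin r) (Localization (p.1.primeCompl (hp := p.2.isPrime)))
          (LocalizedModule (p.1.primeCompl (hp := p.2.isPrime)) M)) := by
  constructor
  · rintro ⟨e⟩ ⟨q, hq⟩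
    exact ⟨((Pi.basisFun _ (Fin r)).map e.symm).localizedModuleOfLE
      (nonZeroDivisors_le_primeCompl_of_mem_associatedPrimes_s7 hq)⟩
  · intro h
    obtain ⟨b⟩ := Module.nonempty_basis_of_localization_maximal (R := FractionRing A) r
      fun P _ ↦ (h ⟨P.under A, P.under_mem_associatedPrimes_of_isMaximal⟩).map
        (·.tensorProductAtPrimeOfUnder P)
    exact ⟨b.equivFun⟩
end
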